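/- No ξ'-independent global minimizer: In the linear LAM with observations o = h(s, ξ), o' = h(s', ξ'), loss L(A,B,C,D) = E[||o' - Ao - B(Co + Do')||^2], suppose θ* = (A*, B*, C*, D*) is a parameter tuple such that z* = C*o + D*o' is measurable with respect to (s, ξ, a, s') only (ξ'-independent), and suppose E_{s,ξ,a,s'}[Var_{ξ'}(Π o' | s, ξ, a, s')] > 0 where Π is the orthogonal projection onto range(B*). Then the tuple θ̃ = (A*, B*, -B*† A*, B*†) achieves strictly smaller loss: L(θ̃) < L(θ*). Hence θ* is not a global minimizer. -/

import Mathlib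

open MeasureTheory Matrix

noncomputable section

/-- Squared Euclidean norm of a vector. -/
def sqNorm {d : ℕ} (v : Fin d → ℝ) : ℝ := ∑ i, (v i) ^ 2

lemma sqNorm_add {d : ℕ} (a b : Fin d → ℝ) :
    sqNorm (a + b) = sqNorm a + sqNorm b + 2 * (a ⬝ᵥ b) := by
  simp only [sqNorm, dotProduct, Pi.add_apply, Finset.mul_sum, ← Finset.sum_add_distrib]
  exact Finset.sum_congr rfl fun i _ => by ring

section Meas

variable {Ω : Type*} {m : MeasurableSpace Ω} {mΩ : MeasurableSpace Ω} {μ : Measure Ω}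
  [IsProbabilityMeasure μ]

lemma memLp_mulVec {n p : ℕ} {f : Ω → Fin n → ℝ} (hf : MemLp f 2 μ)
    (M : Matrix (Fin p) (Fin n) ℝ) : MemLp (fun ω => M.mulVec (f ω)) 2 μ := by
  have := (LinearMap.toContinuousLinearMap M.mulVecLin).comp_memLp' hf
  simpa [Function.comp_def] using this

lemma memLp_apply {n : ℕ} {f : Ω → Fin n → ℝ} (hf : MemLp f 2 μ) (i : Fin n) :
    MemLp (fun ω => f ω i) 2 μ := by
  have := (ContinuousLinearMap.proj (R := ℝ) (φ := fun _ : Fin n => ℝ) i).comp_memLp' hf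
  simpa [Function.comp_def] using this

lemma integrable_sqNorm {n : ℕ} {f : Ω → Fin n → ℝ} (hf : MemLp f 2 μ) :
    Integrable (fun ω => sqNorm (f ω)) μ := by
  simp only [sqNorm]
  exact integrable_finset_sum _ fun i _ => (memLp_apply hf i).integrable_sq

lemma integrable_mul_L2 {f g : Ω → ℝ} (hf : MemLp f 2 μ) (hg : MemLp g 2 μ) :
    Integrable (fun ω => f ω * g ω) μ := by
  refine Integrable.mono' (g := fun ω => (f ω ^ 2 + g ω ^ 2) / 2) ?_
    (hf.aestronglyMeasurable.mul hg.aestronglyMeasurable) ?_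
  · simpa using (hf.integrable_sq.add hg.integrable_sq).div_const 2
  · filter_upwards with ω
    rw [Real.norm_eq_abs, abs_mul]
    nlinarith [sq_nonneg (|f ω| - |g ω|), sq_abs (f ω), sq_abs (g ω)]

/-- The conditional expectation of an L² function is L². -/
lemma memLp_condexp_two (hm : m ≤ mΩ) {f : Ω → ℝ} (hf : MemLp f 2 μ) :
    MemLp (μ[f|m]) 2 μ := by
  set fL := hf.toLp f with hfL
  have he2 : MemLp (condExpL2 ℝ ℝ hm fL : Ω → ℝ) 2 μ := Lp.memLp _
  have key : (condExpL2 ℝ ℝ hm fL : Ω → ℝ) =ᵐ[μ] μ[f|m] := by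
    refine ae_eq_condExp_of_forall_setIntegral_eq hm (hf.integrable one_le_two)
      (fun s _ _ => (he2.integrable one_le_two).integrableOn)
      (fun s hs hμs => ?_) ?_
    · rw [integral_condExpL2_eq hm fL hs hμs.ne]
      exact setIntegral_congr_ae (hm s hs) ((hf.coeFn_toLp).mono fun x hx _ => hx)
    · exact aestronglyMeasurable_condExpL2 hm fL
  exact he2.ae_eq key

/-- Coordinates of the vector-valued conditional expectation. -/
lemma condexp_pi_apply (hm : m ≤ mΩ) {n : ℕ} {F : Ω → Fin n → ℝ}
    (hF : Integrable F μ) (i : Fin n) :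
    (fun ω => (μ[F|m]) ω i) =ᵐ[μ] μ[fun ω => F ω i|m] := by
  have hFi : Integrable (fun ω => F ω i) μ :=
    (ContinuousLinearMap.proj (R := ℝ) (φ := fun _ : Fin n => ℝ) i).integrable_comp hF
  refine ae_eq_condExp_of_forall_setIntegral_eq hm hFi
    (fun s _ _ => ((ContinuousLinearMap.proj (R := ℝ) (φ := fun _ : Fin n => ℝ) i).integrable_comp
      integrable_condExp).integrableOn)
    (fun s hs hμs => ?_) ?_
  · have h1 := (ContinuousLinearMap.proj (R := ℝ) (φ := fun _ : Fin n => ℝ) i).integral_comp_comm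
      (μ := μ.restrict s) (φ := μ[F|m]) integrable_condExp.integrableOn
    have h2 := (ContinuousLinearMap.proj (R := ℝ) (φ := fun _ : Fin n => ℝ) i).integral_comp_comm
      (μ := μ.restrict s) (φ := F) hF.integrableOn
    simp only [ContinuousLinearMap.proj_apply] at h1 h2
    rw [h1, h2, setIntegral_condExp hm hF hs]
  · exact ((continuous_apply i).comp_stronglyMeasurable
      (stronglyMeasurable_condExp (m := m) (μ := μ) (f := F))).aestronglyMeasurable

/-- Conditional expectation minimizes the L² distance among `m`-measurable functions. -/
lemma condexp_l2_min (hm : m ≤ mΩ) {f g : Ω → ℝ} (hf : MemLp f 2 μ) (hg : MemLp g 2 μ)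
    (hgm : StronglyMeasurable[m] g) :
    ∫ ω, (f ω - (μ[f|m]) ω) ^ 2 ∂μ ≤ ∫ ω, (f ω - g ω) ^ 2 ∂μ := by
  set e := μ[f|m] with he
  have he2 : MemLp e 2 μ := memLp_condexp_two hm hf
  have hh2 : MemLp (fun ω => e ω - g ω) 2 μ := he2.sub hg
  have hfe2 : MemLp (fun ω => f ω - e ω) 2 μ := hf.sub he2
  have hhm : StronglyMeasurable[m] (fun ω => e ω - g ω) := stronglyMeasurable_condExp.sub hgm
  -- cross term is zero
  have hcross : ∫ ω, (e ω - g ω) * (f ω - e ω) ∂μ = 0 := by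
    have hmul : ∫ ω, (e ω - g ω) * f ω ∂μ = ∫ ω, (e ω - g ω) * e ω ∂μ := by
      have hint : Integrable (fun ω => (e ω - g ω) * f ω) μ := integrable_mul_L2 hh2 hf
      have h1 : μ[(fun ω => e ω - g ω) * f|m] =ᵐ[μ] (fun ω => e ω - g ω) * μ[f|m] :=
        condExp_mul_of_stronglyMeasurable_left hhm hint (hf.integrable one_le_two)
      calc ∫ ω, (e ω - g ω) * f ω ∂μ
          = ∫ ω, (μ[(fun ω => e ω - g ω) * f|m]) ω ∂μ := (integral_condExp hm).symm
        _ = ∫ ω, (e ω - g ω) * e ω ∂μ := integral_congr_ae h1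
    have : ∫ ω, (e ω - g ω) * (f ω - e ω) ∂μ
        = ∫ ω, (e ω - g ω) * f ω ∂μ - ∫ ω, (e ω - g ω) * e ω ∂μ := by
      rw [← integral_sub (integrable_mul_L2 hh2 hf) (integrable_mul_L2 hh2 he2)]
      congr 1; funext ω; ring
    rw [this, hmul, sub_self]
  have hsplit : ∀ ω, (f ω - g ω) ^ 2
      = (f ω - e ω) ^ 2 + ((e ω - g ω) ^ 2 + 2 * ((e ω - g ω) * (f ω - e ω))) := by
    intro ω; ring
  have hint2 : Integrable (fun ω => (e ω - g ω) ^ 2 + 2 * ((e ω - g ω) * (f ω - e ω))) μ :=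
    hh2.integrable_sq.add ((integrable_mul_L2 hh2 hfe2).const_mul 2)
  have hsum : ∫ ω, (f ω - g ω) ^ 2 ∂μ
      = ∫ ω, (f ω - e ω) ^ 2 ∂μ
        + ∫ ω, ((e ω - g ω) ^ 2 + 2 * ((e ω - g ω) * (f ω - e ω))) ∂μ := by
    rw [← integral_add hfe2.integrable_sq hint2]
    exact integral_congr_ae (Filter.Eventually.of_forall fun ω => hsplit ω)
  have h2 : ∫ ω, ((e ω - g ω) ^ 2 + 2 * ((e ω - g ω) * (f ω - e ω))) ∂μ
      = ∫ ω, (e ω - g ω) ^ 2 ∂μ + 2 * ∫ ω, (e ω - g ω) * (f ω - e ω) ∂μ := by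
    rw [integral_add hh2.integrable_sq ((integrable_mul_L2 hh2 hfe2).const_mul 2),
      integral_const_mul]
  rw [hsum, h2, hcross]
  have hnn := integral_nonneg (μ := μ) (f := fun ω => (e ω - g ω) ^ 2) (fun ω => sq_nonneg (e ω - g ω))
  linarith

end Meas

lemma stronglyMeasurable_mulVec {Ω : Type*} {m : MeasurableSpace Ω} {n p : ℕ}
    {f : Ω → Fin n → ℝ} (hf : StronglyMeasurable[m] f) (M : Matrix (Fin p) (Fin n) ℝ) :
    StronglyMeasurable[m] (fun ω => M.mulVec (f ω)) := by
  have := (LinearMap.toContinuousLinearMap M.mulVecLin).continuous.comp_stronglyMeasurable hf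
  simpa [Function.comp_def] using this

/-- No ξ'-independent global minimizer: if the latent action `z⋆ = C⋆ o + D⋆ o'` of a
parameter tuple `θ⋆ = (A⋆, B⋆, C⋆, D⋆)` is measurable with respect to the
sub-σ-algebra `m = σ(s, ξ, a, s')` (ξ'-independence), and the expected conditional
variance of `Π o'` given `m` is positive (`Π = B⋆ B⋆†` the orthogonal projection onto
`range B⋆`, `B⋆†` the Penrose pseudoinverse), then the tuple
`θ̃ = (A⋆, B⋆, -B⋆† A⋆, B⋆†)` achieves strictly smaller reconstruction loss, so `θ⋆`
is not a global minimizer. -/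
theorem no_xi_independent_global_minimizer
    {Ω : Type*} {mΩ : MeasurableSpace Ω} (μ : Measure Ω) [IsProbabilityMeasure μ]
    (m : MeasurableSpace Ω) (hm : m ≤ mΩ)
    {d k : ℕ}
    (As : Matrix (Fin d) (Fin d) ℝ) (Bs : Matrix (Fin d) (Fin k) ℝ)
    (Cs Ds : Matrix (Fin k) (Fin d) ℝ) (Bd : Matrix (Fin k) (Fin d) ℝ)
    (h1 : Bs * Bd * Bs = Bs) (h2 : Bd * Bs * Bd = Bd)
    (h3 : (Bs * Bd)ᵀ = Bs * Bd) (h4 : (Bd * Bs)ᵀ = Bd * Bs)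
    (o o' : Ω → Fin d → ℝ)
    (ho2 : MemLp o 2 μ) (ho'2 : MemLp o' 2 μ)
    (hom : StronglyMeasurable[m] o)
    (hzm : StronglyMeasurable[m] (fun ω => Cs.mulVec (o ω) + Ds.mulVec (o' ω)))
    (hvar : 0 < ∫ ω, sqNorm ((Bs * Bd).mulVec (o' ω)
        - (μ[(fun ω => (Bs * Bd).mulVec (o' ω))|m]) ω) ∂μ) :
    (∫ ω, sqNorm (o' ω - As.mulVec (o ω)
        - Bs.mulVec ((-(Bd * As)).mulVec (o ω) + Bd.mulVec (o' ω))) ∂μ)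
      < ∫ ω, sqNorm (o' ω - As.mulVec (o ω)
          - Bs.mulVec (Cs.mulVec (o ω) + Ds.mulVec (o' ω))) ∂μ := by
  letI : MeasurableSpace Ω := mΩ
  have hPP : (Bs * Bd) * (Bs * Bd) = Bs * Bd := by
    have := congrArg (· * Bd) h1
    simpa [Matrix.mul_assoc] using this
  set z : Ω → Fin k → ℝ := fun ω => Cs.mulVec (o ω) + Ds.mulVec (o' ω) with hzdef
  set X : Ω → Fin d → ℝ := fun ω => (Bs * Bd).mulVec (o' ω) with hXdef
  set r : Ω → Fin d → ℝ := fun ω => o' ω - As.mulVec (o ω) with hrdef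
  set a : Ω → Fin d → ℝ := fun ω => r ω - (Bs * Bd).mulVec (r ω) with hadef
  set g : Ω → Fin d → ℝ :=
    fun ω => (Bs * Bd).mulVec (As.mulVec (o ω)) + Bs.mulVec (z ω) with hgdef
  -- pointwise: the new residual is `a`
  have hnew : ∀ ω, o' ω - As.mulVec (o ω)
      - Bs.mulVec ((-(Bd * As)).mulVec (o ω) + Bd.mulVec (o' ω)) = a ω := by
    intro ω
    simp only [hadef, hrdef, Matrix.mulVec_add, Matrix.neg_mulVec, Matrix.mulVec_mulVec,
      Matrix.mulVec_sub, Matrix.mulVec_neg, ← Matrix.mul_assoc]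
    abel
  -- pointwise: residual decomposition
  have hXg : ∀ ω, X ω - g ω = (Bs * Bd).mulVec (r ω - Bs.mulVec (z ω)) := by
    intro ω
    simp only [hXdef, hgdef, hrdef, Matrix.mulVec_sub, Matrix.mulVec_mulVec]
    rw [Matrix.mul_assoc, h1]
    abel
  have hdecomp : ∀ ω, r ω - Bs.mulVec (z ω) = a ω + (X ω - g ω) := by
    intro ω
    rw [hXg ω]
    simp only [hadef, hrdef, hXdef, Matrix.mulVec_sub, Matrix.mulVec_mulVec]
    rw [Matrix.mul_assoc, h1]
    abel
  have horth : ∀ ω, a ω ⬝ᵥ (X ω - g ω) = 0 := by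
    intro ω
    rw [hXg ω, Matrix.dotProduct_mulVec, ← Matrix.mulVec_transpose, h3]
    have : (Bs * Bd).mulVec (a ω) = 0 := by
      simp only [hadef, Matrix.mulVec_sub, Matrix.mulVec_mulVec, hPP, sub_self]
    rw [this, zero_dotProduct]
  have hold : ∀ ω, sqNorm (r ω - Bs.mulVec (z ω))
      = sqNorm (a ω) + sqNorm (X ω - g ω) := by
    intro ω
    rw [hdecomp ω, sqNorm_add, horth ω, mul_zero, add_zero]
  -- MemLp facts
  have hz2 : MemLp z 2 μ := (memLp_mulVec ho2 Cs).add (memLp_mulVec ho'2 Ds)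
  have hr2 : MemLp r 2 μ := ho'2.sub (memLp_mulVec ho2 As)
  have ha2 : MemLp a 2 μ := hr2.sub (memLp_mulVec hr2 (Bs * Bd))
  have hX2 : MemLp X 2 μ := memLp_mulVec ho'2 (Bs * Bd)
  have hg2 : MemLp g 2 μ :=
    (memLp_mulVec (memLp_mulVec ho2 As) (Bs * Bd)).add (memLp_mulVec hz2 Bs)
  have hXg2 : MemLp (fun ω => X ω - g ω) 2 μ := hX2.sub hg2
  -- rewrite both integrals
  have hnewint : (∫ ω, sqNorm (o' ω - As.mulVec (o ω)
      - Bs.mulVec ((-(Bd * As)).mulVec (o ω) + Bd.mulVec (o' ω))) ∂μ)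
      = ∫ ω, sqNorm (a ω) ∂μ := by
    exact integral_congr_ae (Filter.Eventually.of_forall fun ω => congrArg sqNorm (hnew ω))
  have holdint : (∫ ω, sqNorm (o' ω - As.mulVec (o ω) - Bs.mulVec (z ω)) ∂μ)
      = ∫ ω, sqNorm (a ω) ∂μ + ∫ ω, sqNorm (X ω - g ω) ∂μ := by
    rw [← integral_add (integrable_sqNorm ha2) (integrable_sqNorm hXg2)]
    exact integral_congr_ae (Filter.Eventually.of_forall fun ω => hold ω)
  rw [hnewint, holdint]
  -- it remains to show the second term is positive
  have hgm : StronglyMeasurable[m] g :=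
    (stronglyMeasurable_mulVec (stronglyMeasurable_mulVec hom As) (Bs * Bd)).add
      (stronglyMeasurable_mulVec hzm Bs)
  have key : (∫ ω, sqNorm (X ω - (μ[X|m]) ω) ∂μ) ≤ ∫ ω, sqNorm (X ω - g ω) ∂μ := by
    have hXint : Integrable X μ := hX2.integrable one_le_two
    have hEi : ∀ i : Fin d, (fun ω => (μ[X|m]) ω i) =ᵐ[μ] μ[fun ω => X ω i|m] :=
      fun i => condexp_pi_apply hm hXint i
    have hXi2 : ∀ i : Fin d, MemLp (fun ω => X ω i) 2 μ := fun i => memLp_apply hX2 i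
    have hXEi2 : ∀ i : Fin d, MemLp (fun ω => X ω i - (μ[X|m]) ω i) 2 μ := by
      intro i
      refine ((hXi2 i).sub (memLp_condexp_two hm (hXi2 i))).ae_eq ?_
      filter_upwards [hEi i] with ω hω
      simp [Pi.sub_apply, hω]
    have lhs_eq : (∫ ω, sqNorm (X ω - (μ[X|m]) ω) ∂μ)
        = ∑ i, ∫ ω, (X ω i - (μ[X|m]) ω i) ^ 2 ∂μ := by
      simp only [sqNorm, Pi.sub_apply]
      exact integral_finset_sum _ fun i _ => (hXEi2 i).integrable_sq
    have rhs_eq : (∫ ω, sqNorm (X ω - g ω) ∂μ)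
        = ∑ i, ∫ ω, (X ω i - g ω i) ^ 2 ∂μ := by
      simp only [sqNorm, Pi.sub_apply]
      exact integral_finset_sum _ fun i _ => (memLp_apply hXg2 i).integrable_sq
    rw [lhs_eq, rhs_eq]
    refine Finset.sum_le_sum fun i _ => ?_
    have h1i : (∫ ω, (X ω i - (μ[X|m]) ω i) ^ 2 ∂μ)
        = ∫ ω, (X ω i - (μ[fun ω => X ω i|m]) ω) ^ 2 ∂μ := by
      refine integral_congr_ae ?_
      filter_upwards [hEi i] with ω hω
      rw [hω]
    rw [h1i]
    refine condexp_l2_min hm (hXi2 i) (memLp_apply hg2 i) ?_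
    exact (continuous_apply i).comp_stronglyMeasurable hgm
  have hpos : 0 < ∫ ω, sqNorm (X ω - g ω) ∂μ := lt_of_lt_of_le hvar key
  linarith
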